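/- Let r, s ∈ H_n be strongly distinct hyperbolic vectors (r_t ≠ s_t for all t = 1,2,3), and let f_r, f_s be r-functions with parameters r and s respectively. Then the pointwise product f_r · f_s is again an r-function with parameter given componentwise by max(r_t, s_t). -/

import Mathlib

open MeasureTheory

/-- The Haar function of the dyadic interval `[a/2^k, (a+1)/2^k)`:
`-1` on the left half, `+1` on the right half, `0` outside. -/
noncomputable def haarFn (k a : ℕ) (x : ℝ) : ℝ :=
  if x ∈ Set.Ico ((a : ℝ) / 2 ^ k) ((2 * a + 1) / 2 ^ (k + 1)) then -1
  else if x ∈ Set.Ico (((2 * a : ℝ) + 1) / 2 ^ (k + 1)) (((a : ℝ) + 1) / 2 ^ k) then 1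
  else 0


/-- The three-dimensional Haar function of the dyadic rectangle indexed by `(r, a)`. -/
noncomputable def haarFn3 (r a : Fin 3 → ℕ) (x : Fin 3 → ℝ) : ℝ :=
  ∏ t, haarFn (r t) (a t) (x t)

/-- The `r`-function with parameter `r` and signs `α`:
`f_r = ∑_{R ∈ D³_r} α(R) h_R`, the sum running over all dyadic rectangles with
`t`-th side length `2^{-r t}`. -/
noncomputable def rFunction (r : Fin 3 → ℕ) (α : (Fin 3 → ℕ) → ℝ) (x : Fin 3 → ℝ) : ℝ :=
  ∑ a ∈ Fintype.piFinset (fun t => Finset.range (2 ^ r t)), α a * haarFn3 r a x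

/-!
On `[0,1)`, exactly one level-`k` Haar function is nonzero at `x`, namely that of the dyadic
interval `⌊2^k x⌋`, and its value is a sign fixed by the next binary digit of `x`. Hence on the
cube an `r`-function equals `α(⌊2^r x⌋) ∏ₜ ε_{rₜ}(xₜ)`, and outside it vanishes. In the product
of an `r`- and an `s`-function, write `m = max r s`: the indices `⌊2^r x⌋` and `⌊2^s x⌋` are
functions of `⌊2^m x⌋`, and since `rₜ ≠ sₜ` the coarser sign `ε_{min(rₜ,sₜ)}(xₜ)` is one too. So the
product is `γ(⌊2^m x⌋) ∏ₜ ε_{mₜ}(xₜ)` for a sign function `γ`, i.e. an `m`-function.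
-/

lemma Nat.floor_two_pow_mul_div_two_pow (x : ℝ) {j k : ℕ} (h : j ≤ k) :
    ⌊(2 : ℝ) ^ k * x⌋₊ / 2 ^ (k - j) = ⌊(2 : ℝ) ^ j * x⌋₊ := by
  have hpow : (2 : ℝ) ^ j * x = 2 ^ k * x / ((2 ^ (k - j) : ℕ) : ℝ) := by
    rw [Nat.cast_pow, Nat.cast_ofNat, ← pow_sub_mul_pow 2 h]
    field_simp
  rw [hpow, Nat.floor_div_natCast]

lemma mem_Ico_div_iff_floor_eq {c x : ℝ} (hc : 0 < c) (hx : 0 ≤ x) (N : ℕ) :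
    x ∈ Set.Ico (N / c) ((N + 1) / c) ↔ ⌊c * x⌋₊ = N := by
  rw [Nat.floor_eq_iff (by positivity), Set.mem_Ico, div_le_iff₀ hc, lt_div_iff₀ hc,
    mul_comm x]

/-- The value `±1` of the level-`k` Haar function whose support contains `x`: it is the
`(k+1)`-st binary digit of `x`, recoded as `-1` for `0` and `1` for `1`. -/
noncomputable def haarSign (k : ℕ) (x : ℝ) : ℝ := (-1) ^ (⌊(2 : ℝ) ^ (k + 1) * x⌋₊ + 1)

lemma haarFn_of_nonneg (k a : ℕ) {x : ℝ} (hx : 0 ≤ x) :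
    haarFn k a x = if ⌊(2 : ℝ) ^ k * x⌋₊ = a then haarSign k x else 0 := by
  have hk : (0 : ℝ) < 2 ^ (k + 1) := by positivity
  have hleft : x ∈ Set.Ico ((a : ℝ) / 2 ^ k) ((2 * a + 1) / 2 ^ (k + 1)) ↔
      ⌊(2 : ℝ) ^ (k + 1) * x⌋₊ = 2 * a := by
    rw [← mem_Ico_div_iff_floor_eq hk hx]
    push_cast
    rw [pow_succ]
    field_simp
  have hright : x ∈ Set.Ico (((2 * a : ℝ) + 1) / 2 ^ (k + 1)) (((a : ℝ) + 1) / 2 ^ k) ↔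
      ⌊(2 : ℝ) ^ (k + 1) * x⌋₊ = 2 * a + 1 := by
    rw [← mem_Ico_div_iff_floor_eq hk hx]
    push_cast
    rw [pow_succ, ← mul_div_mul_left _ (2 ^ k : ℝ) two_ne_zero]
    ring_nf
  have hcoarse : ⌊(2 : ℝ) ^ (k + 1) * x⌋₊ / 2 = ⌊(2 : ℝ) ^ k * x⌋₊ := by
    simpa using Nat.floor_two_pow_mul_div_two_pow x (Nat.le_succ k)
  unfold haarFn haarSign
  simp only [hleft, hright, ← hcoarse]
  generalize ⌊(2 : ℝ) ^ (k + 1) * x⌋₊ = N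
  rcases Nat.even_or_odd' N with ⟨b, rfl | rfl⟩ <;> split_ifs <;>
    first | omega | simp [pow_succ]

lemma haarFn_eq_zero_of_notMem_Ico {k a : ℕ} (ha : a < 2 ^ k) {x : ℝ}
    (hx : x ∉ Set.Ico (0 : ℝ) 1) : haarFn k a x = 0 := by
  rcases lt_or_ge x 0 with hneg | hpos
  · have hle : ∀ b c : ℝ, 0 ≤ b → x ∉ Set.Ico b c := fun b c hb hmem => by
      linarith [hmem.1]
    unfold haarFn
    rw [if_neg (hle _ _ (by positivity)), if_neg (hle _ _ (by positivity))]
  · have hone : 1 ≤ x := by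
      by_contra h
      exact hx ⟨hpos, not_le.mp h⟩
    have hfloor : 2 ^ k ≤ ⌊(2 : ℝ) ^ k * x⌋₊ := by
      apply Nat.le_floor
      push_cast
      nlinarith [pow_pos (two_pos : (0 : ℝ) < 2) k]
    rw [haarFn_of_nonneg k a hpos, if_neg (by omega)]

lemma floor_two_pow_mul_lt {x : ℝ} (hx : x ∈ Set.Ico (0 : ℝ) 1) (k : ℕ) :
    ⌊(2 : ℝ) ^ k * x⌋₊ < 2 ^ k := by
  rw [Nat.floor_lt (by have := hx.1; positivity)]
  push_cast
  nlinarith [hx.2, pow_pos (two_pos : (0 : ℝ) < 2) k]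

lemma rFunction_of_forall_mem_Ico (r : Fin 3 → ℕ) (α : (Fin 3 → ℕ) → ℝ) {x : Fin 3 → ℝ}
    (hx : ∀ t, x t ∈ Set.Ico (0 : ℝ) 1) :
    rFunction r α x = α (fun t => ⌊(2 : ℝ) ^ r t * x t⌋₊) * ∏ t, haarSign (r t) (x t) := by
  have hhaar : ∀ a, haarFn3 r a x =
      if (fun t => ⌊(2 : ℝ) ^ r t * x t⌋₊) = a then ∏ t, haarSign (r t) (x t) else 0 := by
    intro a
    simp only [haarFn3, haarFn_of_nonneg _ _ (hx _).1, Finset.prod_ite_zero, Finset.mem_univ,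
      true_imp_iff, funext_iff]
  simp only [rFunction, hhaar, mul_ite, mul_zero, Finset.sum_ite_eq,
    Fintype.mem_piFinset, Finset.mem_range, floor_two_pow_mul_lt (hx _), implies_true, if_true]

lemma rFunction_of_notMem_Ico (r : Fin 3 → ℕ) (α : (Fin 3 → ℕ) → ℝ) {x : Fin 3 → ℝ} {t : Fin 3}
    (hx : x t ∉ Set.Ico (0 : ℝ) 1) : rFunction r α x = 0 := by
  refine Finset.sum_eq_zero fun a ha => ?_
  have hat : a t < 2 ^ r t := Finset.mem_range.mp (Fintype.mem_piFinset.mp ha t)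
  rw [haarFn3, Finset.prod_eq_zero (Finset.mem_univ t) (haarFn_eq_zero_of_notMem_Ico hat hx),
    mul_zero]

lemma haarSign_eq_of_lt {j k : ℕ} (h : j < k) (x : ℝ) :
    haarSign j x = (-1) ^ (⌊(2 : ℝ) ^ k * x⌋₊ / 2 ^ (k - j - 1) + 1) := by
  rw [haarSign, ← Nat.floor_two_pow_mul_div_two_pow x h, Nat.sub_sub]

/-- Since `min k l < max k l`, the coarser sign is constant on each dyadic interval of the
finer level, so it can be read off the index `N = ⌊2 ^ max k l * x⌋₊` of that interval. -/
lemma haarSign_mul_haarSign {k l : ℕ} (h : k ≠ l) (x : ℝ) :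
    haarSign k x * haarSign l x =
      (-1) ^ (⌊(2 : ℝ) ^ max k l * x⌋₊ / 2 ^ (max k l - min k l - 1) + 1) *
        haarSign (max k l) x := by
  rcases h.lt_or_gt with hkl | hlk
  · rw [max_eq_right hkl.le, min_eq_left hkl.le, haarSign_eq_of_lt hkl]
  · rw [max_eq_left hlk.le, min_eq_right hlk.le, haarSign_eq_of_lt hlk, mul_comm]

noncomputable def productSigns (r s : Fin 3 → ℕ) (α β : (Fin 3 → ℕ) → ℝ) (c : Fin 3 → ℕ) : ℝ :=
  α (fun t => c t / 2 ^ (max (r t) (s t) - r t)) *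
    β (fun t => c t / 2 ^ (max (r t) (s t) - s t)) *
    ∏ t, (-1) ^ (c t / 2 ^ (max (r t) (s t) - min (r t) (s t) - 1) + 1)

lemma productSigns_eq_one_or_neg_one {r s : Fin 3 → ℕ} {α β : (Fin 3 → ℕ) → ℝ}
    (hα : ∀ a, α a = 1 ∨ α a = -1) (hβ : ∀ a, β a = 1 ∨ β a = -1) (c : Fin 3 → ℕ) :
    productSigns r s α β c = 1 ∨ productSigns r s α β c = -1 := by
  have habs : ∀ y : ℝ, y = 1 ∨ y = -1 ↔ |y| = 1 := fun y => (abs_eq zero_le_one).symm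
  simp only [habs] at hα hβ ⊢
  simp [productSigns, abs_mul, Finset.abs_prod, hα, hβ]

lemma rFunction_mul_rFunction_of_forall_mem_Ico {r s : Fin 3 → ℕ} (hrs : ∀ t, r t ≠ s t)
    (α β : (Fin 3 → ℕ) → ℝ) {x : Fin 3 → ℝ} (hx : ∀ t, x t ∈ Set.Ico (0 : ℝ) 1) :
    rFunction r α x * rFunction s β x =
      rFunction (fun t => max (r t) (s t)) (productSigns r s α β) x := by
  simp only [rFunction_of_forall_mem_Ico _ _ hx, productSigns,
    Nat.floor_two_pow_mul_div_two_pow _ (le_max_left _ _),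
    Nat.floor_two_pow_mul_div_two_pow _ (le_max_right _ _)]
  rw [mul_mul_mul_comm, ← Finset.prod_mul_distrib,
    Finset.prod_congr rfl fun t _ => haarSign_mul_haarSign (hrs t) (x t),
    Finset.prod_mul_distrib]
  ring

theorem rFunction_product_strongly_distinct_general (r s : Fin 3 → ℕ)
    (hsd : ∀ t, r t ≠ s t)
    (α β : (Fin 3 → ℕ) → ℝ) (hα : ∀ a, α a = 1 ∨ α a = -1) (hβ : ∀ a, β a = 1 ∨ β a = -1) :
    ∃ γ : (Fin 3 → ℕ) → ℝ, (∀ a, γ a = 1 ∨ γ a = -1) ∧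
      ∀ x : Fin 3 → ℝ, rFunction r α x * rFunction s β x =
        rFunction (fun t => max (r t) (s t)) γ x := by
  refine ⟨productSigns r s α β, productSigns_eq_one_or_neg_one hα hβ, fun x => ?_⟩
  by_cases hx : ∀ t, x t ∈ Set.Ico (0 : ℝ) 1
  · exact rFunction_mul_rFunction_of_forall_mem_Ico hsd α β hx
  · obtain ⟨t, ht⟩ := not_forall.mp hx
    simp only [rFunction_of_notMem_Ico _ _ ht, zero_mul]

theorem rFunction_product_strongly_distinct (n : ℕ) (r s : Fin 3 → ℕ)
    (hr : r 0 + r 1 + r 2 = n) (hs : s 0 + s 1 + s 2 = n)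
    (hsd : ∀ t, r t ≠ s t)
    (α β : (Fin 3 → ℕ) → ℝ) (hα : ∀ a, α a = 1 ∨ α a = -1) (hβ : ∀ a, β a = 1 ∨ β a = -1) :
    ∃ γ : (Fin 3 → ℕ) → ℝ, (∀ a, γ a = 1 ∨ γ a = -1) ∧
      ∀ x : Fin 3 → ℝ, rFunction r α x * rFunction s β x =
        rFunction (fun t => max (r t) (s t)) γ x :=
  rFunction_product_strongly_distinct_general r s hsd α β hα hβ
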